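/- The twisted-cube support C(c,ℓ) is closed in ℝ^n if and only if m_{σ,k} ≥ 0 for every sign vector σ ∈ {+,−}^n and every k with 1 ≤ k ≤ n. -/
import Mathlib


/-- The affine functions `A_j(x) = ℓ_j − Σ_{k>j} c_{jk} x_k` (for the top index the sum
is empty so `A_n = ℓ_n`). Indices are 0-based via `Fin n`. -/
def Afun (n : ℕ) (c : Fin n → Fin n → ℤ) (L : Fin n → ℤ) (j : Fin n) (x : Fin n → ℝ) : ℝ :=
  (L j : ℝ) - ∑ k ∈ Finset.univ.filter (fun k => j < k), (c j k : ℝ) * x k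

/-- Condition (S-k): `A_k(x) < x_k < 0` or `0 ≤ x_k ≤ A_k(x)`. -/
def Scond (n : ℕ) (c : Fin n → Fin n → ℤ) (L : Fin n → ℤ) (k : Fin n) (x : Fin n → ℝ) : Prop :=
  (Afun n c L k x < x k ∧ x k < 0) ∨ (0 ≤ x k ∧ x k ≤ Afun n c L k x)

/-- The twisted-cube support `C(c,ℓ)`. -/
def Cset (n : ℕ) (c : Fin n → Fin n → ℤ) (L : Fin n → ℤ) : Set (Fin n → ℝ) :=
  {x | ∀ k, Scond n c L k x}

/-- The polytope `P(c,ℓ) = {x : 0 ≤ x_j ≤ A_j(x) for all j}`. -/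
def Pset (n : ℕ) (c : Fin n → Fin n → ℤ) (L : Fin n → ℤ) : Set (Fin n → ℝ) :=
  {x | ∀ j, 0 ≤ x j ∧ x j ≤ Afun n c L j x}

/-- Condition (P): for each `k`, whenever the coordinates above `k` satisfy
`0 ≤ x_j ≤ A_j(x)`, one has `A_k(x) ≥ 0`. (For the top index this says `ℓ_n ≥ 0`.) -/
def CondP (n : ℕ) (c : Fin n → Fin n → ℤ) (L : Fin n → ℤ) : Prop :=
  ∀ k : Fin n, ∀ x : Fin n → ℝ,
    (∀ j : Fin n, k < j → 0 ≤ x j ∧ x j ≤ Afun n c L j x) →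
    0 ≤ Afun n c L k x

/-- The Cartier data `m_σ` for a sign vector `σ` (`true` = `+`, `false` = `−`), defined by
downward recursion: `m_{σ,j} = 0` if `σ_j = +`, and `m_{σ,j} = A_j(m_σ)` if `σ_j = −`. -/
noncomputable def mvec (n : ℕ) (c : Fin n → Fin n → ℤ) (L : Fin n → ℤ)
    (σ : Fin n → Bool) (j : Fin n) : ℝ :=
  if σ j then 0
  else (L j : ℝ) - ∑ k ∈ (Finset.univ.filter (fun k => j < k)).attach,
      (c j k.1 : ℝ) * mvec n c L σ k.1
termination_by n - j.1
decreasing_by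
  have hk := Fin.lt_iff_val_lt_val.mp (Finset.mem_filter.mp k.2).2
  have := k.1.isLt
  omega

noncomputable def extend (n : ℕ) (c : Fin n → Fin n → ℤ) (L : Fin n → ℤ) (k : Fin n)
    (y : Fin n → ℝ) (j : Fin n) : ℝ :=
  if k ≤ j then y j
  else (1/2) * min ((L j : ℝ) - ∑ i ∈ (Finset.univ.filter (fun i => j < i)).attach,
      (c j i.1 : ℝ) * extend n c L k y i.1) 0
termination_by n - j.1
decreasing_by
  have hk := Fin.lt_iff_val_lt_val.mp (Finset.mem_filter.mp i.2).2
  have := i.1.isLt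
  omega

variable {n : ℕ} {c : Fin n → Fin n → ℤ} {L : Fin n → ℤ}

lemma Afun_congr {j : Fin n} {x y : Fin n → ℝ} (h : ∀ k, j < k → x k = y k) :
    Afun n c L j x = Afun n c L j y := by
  unfold Afun
  congr 1
  refine Finset.sum_congr rfl fun k hk => ?_
  rw [h k (Finset.mem_filter.mp hk).2]

lemma mvec_eq (σ : Fin n → Bool) (j : Fin n) :
    mvec n c L σ j = if σ j then 0 else Afun n c L j (mvec n c L σ) := by
  rw [mvec, Afun]
  congr 2
  exact Finset.sum_attach _ fun k => (c j k : ℝ) * mvec n c L σ k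

lemma mvec_congr {σ σ' : Fin n → Bool} :
    ∀ (m : ℕ) (j : Fin n), n - j.1 ≤ m → (∀ i, j ≤ i → σ i = σ' i) →
      mvec n c L σ j = mvec n c L σ' j := by
  intro m
  induction m with
  | zero => intro j hj _; exact absurd hj (by have := j.isLt; omega)
  | succ m ih =>
    intro j hj hagree
    rw [mvec_eq, mvec_eq, hagree j le_rfl]
    by_cases h : σ' j
    · simp [h]
    · simp only [h, if_false]
      refine Afun_congr fun i hi => ?_
      have hi' : j.1 < i.1 := hi
      exact ih i (by have := i.isLt; omega) fun i' hii' => hagree i' (le_trans (le_of_lt hi) hii')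

lemma keymin : ∀ (m t : ℕ), n - t ≤ m → ∀ (e : Fin n → ℝ),
    (∀ j : Fin n, j.1 < t → e j = 0) →
    ∀ x : Fin n → ℝ, (∀ j : Fin n, t ≤ j.1 → 0 ≤ x j ∧ x j ≤ Afun n c L j x) →
    ∃ σ : Fin n → Bool, ∑ j, e j * mvec n c L σ j ≤ ∑ j, e j * x j := by
  intro m
  induction m with
  | zero =>
    intro t ht e he x _
    refine ⟨fun _ => true, le_of_eq ?_⟩
    have hz : ∀ j : Fin n, e j = 0 := fun j => he j (by have := j.isLt; omega)
    simp [hz]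
  | succ m ih =>
    intro t ht e he x hx
    by_cases htn : t < n
    swap
    · refine ⟨fun _ => true, le_of_eq ?_⟩
      have hz : ∀ j : Fin n, e j = 0 := fun j => he j (by have := j.isLt; omega)
      simp [hz]
    set jt : Fin n := ⟨t, htn⟩ with hjtdef
    have hjt : jt.1 = t := rfl
    -- split lemma, general in the coefficient function
    have split : ∀ (f y : Fin n → ℝ), (∀ j : Fin n, j.1 < t → f j = 0) → ∑ j, f j * y j
        = f jt * y jt + ∑ j ∈ Finset.univ.filter (fun j => jt < j), f j * y j := by
      intro f y hf
      rw [← Finset.sum_filter_add_sum_filter_not Finset.univ (fun j => jt < j) (fun j => f j * y j)]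
      have h2 : ∑ j ∈ Finset.univ.filter (fun j => ¬ jt < j), f j * y j = f jt * y jt := by
        refine Finset.sum_eq_single_of_mem jt (Finset.mem_filter.mpr ⟨Finset.mem_univ _, lt_irrefl _⟩)
          (fun b hb hbne => ?_)
        have hb' := (Finset.mem_filter.mp hb).2
        rcases lt_or_eq_of_le (not_lt.mp hb') with h | h
        · rw [hf b h, zero_mul]
        · exact absurd h hbne
      rw [h2]; ring
    have hxjt := hx jt (le_of_eq hjt.symm)
    by_cases hejt : 0 ≤ e jt
    · -- Case A
      set e' := Function.update e jt 0 with he'def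
      have he'0 : ∀ j : Fin n, j.1 < t + 1 → e' j = 0 := by
        intro j hj
        rw [he'def]
        by_cases h : j = jt
        · rw [h, Function.update_self]
        · have hjlt : j.1 < t := by
            have : j.1 ≠ t := fun hh => h (Fin.ext hh)
            omega
          rw [Function.update_of_ne h, he j hjlt]
      obtain ⟨σ', hσ'⟩ := ih (t+1) (by omega) e' he'0 x (fun j hj => hx j (by omega))
      refine ⟨Function.update σ' jt true, ?_⟩
      set σ := Function.update σ' jt true with hσdef
      have hup : ∀ j : Fin n, jt < j → mvec n c L σ j = mvec n c L σ' j := by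
        intro j hj
        refine mvec_congr (n - j.1) j le_rfl fun i hi => ?_
        have hij : jt < i := lt_of_lt_of_le hj hi
        rw [hσdef]
        exact Function.update_of_ne (fun hh => absurd (hh ▸ hij) (lt_irrefl jt)) _ _
      have hσjt : mvec n c L σ jt = 0 := by
        rw [mvec_eq, hσdef, Function.update_self]
        simp
      have he'jt : e' jt = 0 := by rw [he'def, Function.update_self]
      have he'eq : ∀ j ∈ Finset.univ.filter (fun j => jt < j), e' j = e j := by
        intro j hj
        rw [he'def]
        refine Function.update_of_ne (fun hh => ?_) _ _
        have hmem := (Finset.mem_filter.mp hj).2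
        rw [hh] at hmem
        exact lt_irrefl jt hmem
      have key1 : ∑ j, e j * mvec n c L σ j = ∑ j, e' j * mvec n c L σ' j := by
        rw [split e _ he, split e' _ (fun j hj => he'0 j (by omega)), hσjt, he'jt,
          mul_zero, zero_mul, zero_add, zero_add]
        refine Finset.sum_congr rfl fun j hj => ?_
        rw [he'eq j hj, hup j (Finset.mem_filter.mp hj).2]
      have key2 : ∑ j, e' j * x j = ∑ j, e j * x j - e jt * x jt := by
        rw [split e _ he, split e' _ (fun j hj => he'0 j (by omega)), he'jt, zero_mul,
          Finset.sum_congr rfl (fun j hj => by rw [he'eq j hj])]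
        ring
      have hnn : 0 ≤ e jt * x jt := mul_nonneg hejt hxjt.1
      rw [key1]
      rw [key2] at hσ'
      linarith
    · -- Case B : e jt < 0
      push_neg at hejt
      set e' := fun j => if jt < j then e j - e jt * (c jt j : ℝ) else 0 with he'def
      have he'0 : ∀ j : Fin n, j.1 < t + 1 → e' j = 0 := by
        intro j hj
        have h : ¬ jt < j := by
          intro h; have : t < j.1 := h; omega
        simp [he'def, h]
      have identity : ∀ y : Fin n → ℝ, ∑ j, e' j * y j
          = (∑ j ∈ Finset.univ.filter (fun j => jt < j), e j * y j)
            - e jt * ∑ j ∈ Finset.univ.filter (fun j => jt < j), (c jt j : ℝ) * y j := by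
        intro y
        have h1 : ∀ j : Fin n, e' j * y j
            = if jt < j then e j * y j - e jt * ((c jt j : ℝ) * y j) else 0 := by
          intro j; by_cases h : jt < j <;> simp [he'def, h] <;> ring
        rw [Finset.sum_congr rfl (fun j _ => h1 j), ← Finset.sum_filter, Finset.sum_sub_distrib,
          ← Finset.mul_sum]
      have hAfun : ∀ y : Fin n → ℝ, Afun n c L jt y
          = (L jt : ℝ) - ∑ j ∈ Finset.univ.filter (fun j => jt < j), (c jt j : ℝ) * y j :=
        fun y => rfl
      obtain ⟨σ', hσ'⟩ := ih (t+1) (by omega) e' he'0 x (fun j hj => hx j (by omega))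
      refine ⟨Function.update σ' jt false, ?_⟩
      set σ := Function.update σ' jt false with hσdef
      have hup : ∀ j : Fin n, jt < j → mvec n c L σ j = mvec n c L σ' j := by
        intro j hj
        refine mvec_congr (n - j.1) j le_rfl fun i hi => ?_
        have hij : jt < i := lt_of_lt_of_le hj hi
        rw [hσdef]
        exact Function.update_of_ne (fun hh => absurd (hh ▸ hij) (lt_irrefl jt)) _ _
      have hσjt : mvec n c L σ jt = Afun n c L jt (mvec n c L σ) := by
        rw [mvec_eq, hσdef, Function.update_self]
        simp
      have key1 : ∑ j, e' j * mvec n c L σ j = ∑ j, e' j * mvec n c L σ' j := by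
        refine Finset.sum_congr rfl fun j _ => ?_
        by_cases h : jt < j
        · rw [hup j h]
        · simp [he'def, h]
      have hMsplit := split e (mvec n c L σ) he
      have hMid := identity (mvec n c L σ)
      have hMA : mvec n c L σ jt
          = (L jt : ℝ) - ∑ j ∈ Finset.univ.filter (fun j => jt < j),
              (c jt j : ℝ) * mvec n c L σ j := by
        rw [hσjt]; exact hAfun _
      have hxsplit := split e x he
      have hxid := identity x
      have hxA := hAfun x
      have hmul : e jt * Afun n c L jt x ≤ e jt * x jt :=
        mul_le_mul_of_nonpos_left hxjt.2 (le_of_lt hejt)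
      rw [key1] at hMid
      have h1 : e jt * mvec n c L σ jt
          = e jt * (L jt : ℝ) - e jt * ∑ j ∈ Finset.univ.filter (fun j => jt < j),
              (c jt j : ℝ) * mvec n c L σ j := by rw [hMA]; ring
      have h2 : e jt * Afun n c L jt x
          = e jt * (L jt : ℝ) - e jt * ∑ j ∈ Finset.univ.filter (fun j => jt < j),
              (c jt j : ℝ) * x j := by rw [hxA]; ring
      linarith

lemma extend_of_le {k j : Fin n} (h : k ≤ j) (y : Fin n → ℝ) :
    extend n c L k y j = y j := by rw [extend, if_pos h]

lemma extend_of_lt {k j : Fin n} (h : j < k) (y : Fin n → ℝ) :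
    extend n c L k y j = (1/2) * min (Afun n c L j (extend n c L k y)) 0 := by
  rw [extend, if_neg (not_le.mpr h), Afun,
    Finset.sum_attach (Finset.univ.filter (fun i => j < i))
      (fun i => (c j i : ℝ) * extend n c L k y i)]

lemma extend_continuous (k : Fin n) :
    ∀ (m : ℕ) (j : Fin n), n - j.1 ≤ m → Continuous (fun y => extend n c L k y j) := by
  intro m
  induction m with
  | zero => intro j hj; exact absurd hj (by have := j.isLt; omega)
  | succ m ih =>
    intro j hj
    by_cases h : k ≤ j
    · have heq : (fun y => extend n c L k y j) = fun y : Fin n → ℝ => y j :=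
        funext fun y => extend_of_le h y
      rw [heq]; exact continuous_apply j
    · have heq : (fun y => extend n c L k y j)
          = fun y : Fin n → ℝ => (1/2) * min ((L j : ℝ)
            - ∑ i ∈ Finset.univ.filter (fun i => j < i), (c j i : ℝ) * extend n c L k y i) 0 := by
        funext y
        rw [extend_of_lt (not_le.mp h) y, Afun]
      rw [heq]
      refine continuous_const.mul (Continuous.min ?_ continuous_const)
      refine continuous_const.sub (continuous_finset_sum _ fun i hi => ?_)
      refine continuous_const.mul (ih i ?_)
      have : j < i := (Finset.mem_filter.mp hi).2
      have h2 : j.1 < i.1 := this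
      have := i.isLt
      omega

/-- `C(c,ℓ)` is closed iff all coordinates of all the `m_σ` are nonnegative. -/
theorem isClosed_Cset_iff_mvec_nonneg (n : ℕ) (hn : 0 < n)
    (c : Fin n → Fin n → ℤ) (L : Fin n → ℤ) :
    IsClosed (Cset n c L) ↔ ∀ (σ : Fin n → Bool) (k : Fin n), 0 ≤ mvec n c L σ k := by
  classical
  constructor
  · -- closed → nonneg
    intro hclosed
    by_contra hcon
    push_neg at hcon
    obtain ⟨σ1, k1, hk1⟩ := hcon
    set S := Finset.univ.filter (fun k : Fin n => ∃ σ, mvec n c L σ k < 0) with hS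
    have hk1S : k1 ∈ S := Finset.mem_filter.mpr ⟨Finset.mem_univ _, σ1, hk1⟩
    obtain ⟨k, hkS, hkmax⟩ := Finset.exists_max_image S Fin.val ⟨k1, hk1S⟩
    obtain ⟨σ0, hσ0⟩ := (Finset.mem_filter.mp hkS).2
    have hmax : ∀ j : Fin n, k < j → ∀ σ, 0 ≤ mvec n c L σ j := by
      intro j hj σ
      by_contra h
      push_neg at h
      have hjS : j ∈ S := Finset.mem_filter.mpr ⟨Finset.mem_univ _, σ, h⟩
      have h2 := hkmax j hjS
      have h3 : k.1 < j.1 := hj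
      omega
    have hσ0k : σ0 k = false := by
      cases h : σ0 k
      · rfl
      · exfalso
        have hz : mvec n c L σ0 k = 0 := by rw [mvec_eq, h]; simp
        rw [hz] at hσ0; exact lt_irrefl 0 hσ0
    have hmk : mvec n c L σ0 k = Afun n c L k (mvec n c L σ0) := by
      rw [mvec_eq, hσ0k]; simp
    set M := mvec n c L σ0 k with hM
    set y : ℝ → Fin n → ℝ := fun t j => if j = k then t * M else mvec n c L σ0 j with hy
    set path : ℝ → Fin n → ℝ := fun t => extend n c L k (y t) with hpath
    have F0 : ∀ (t : ℝ) (j : Fin n), k < j → path t j = mvec n c L σ0 j := by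
      intro t j hj
      show extend n c L k (y t) j = _
      rw [extend_of_le (le_of_lt hj)]
      show (if j = k then _ else _) = _
      rw [if_neg (ne_of_gt hj)]
    have F1 : ∀ t : ℝ, path t k = t * M := by
      intro t
      show extend n c L k (y t) k = _
      rw [extend_of_le le_rfl]
      show (if k = k then _ else _) = _
      rw [if_pos rfl]
    have F2 : ∀ (t : ℝ) (j : Fin n), j < k →
        path t j = (1/2) * min (Afun n c L j (path t)) 0 :=
      fun t j hj => extend_of_lt hj (y t)
    have G : ∀ (t : ℝ) (j : Fin n), k ≤ j →
        Afun n c L j (path t) = Afun n c L j (mvec n c L σ0) :=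
      fun t j hj => Afun_congr fun i hi => F0 t i (lt_of_le_of_lt hj hi)
    have hMA : ∀ t : ℝ, Afun n c L k (path t) = M := by
      intro t; rw [G t k le_rfl, ← hmk]
    have hflip : ∀ j : Fin n, k < j → 0 ≤ Afun n c L j (mvec n c L σ0) := by
      intro j hj
      set σ' := Function.update σ0 j false with hσ'
      have h1 : mvec n c L σ' j = Afun n c L j (mvec n c L σ') := by
        rw [mvec_eq, hσ', Function.update_self]; simp
      have h2 : Afun n c L j (mvec n c L σ') = Afun n c L j (mvec n c L σ0) := by
        refine Afun_congr fun i hi => ?_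
        refine mvec_congr (n - i.1) i le_rfl fun i' hii' => ?_
        rw [hσ']
        refine Function.update_of_ne (fun hh => ?_) _ _
        have hlt : j < i' := lt_of_lt_of_le hi hii'
        rw [hh] at hlt; exact lt_irrefl j hlt
      have h3 := hmax j hj σ'
      rw [h1, h2] at h3
      exact h3
    have hmem : ∀ t : ℝ, t ∈ Set.Ioo (0:ℝ) 1 → path t ∈ Cset n c L := by
      intro t ht
      simp only [Cset, Set.mem_setOf_eq]
      intro j
      unfold Scond
      rcases lt_trichotomy j k with hjk | hjk | hjk
      · rcases le_or_gt 0 (Afun n c L j (path t)) with hA | hA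
        · right
          rw [F2 t j hjk, min_eq_right hA, mul_zero]
          exact ⟨le_rfl, hA⟩
        · left
          rw [F2 t j hjk, min_eq_left (le_of_lt hA)]
          constructor <;> linarith
      · subst hjk
        left
        rw [F1, hMA]
        constructor
        · nlinarith [mul_pos (sub_pos.mpr ht.2) (neg_pos.mpr hσ0)]
        · exact mul_neg_of_pos_of_neg ht.1 hσ0
      · cases hb : σ0 j with
        | true =>
          right
          have hz : mvec n c L σ0 j = 0 := by rw [mvec_eq, hb]; simp
          rw [F0 t j hjk, hz, G t j (le_of_lt hjk)]
          exact ⟨le_rfl, hflip j hjk⟩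
        | false =>
          right
          have hz : mvec n c L σ0 j = Afun n c L j (mvec n c L σ0) := by
            rw [mvec_eq, hb]; simp
          have hge := hmax j hjk σ0
          rw [F0 t j hjk, G t j (le_of_lt hjk)]
          exact ⟨hge, le_of_eq hz⟩
    have hnot : path 1 ∉ Cset n c L := by
      intro hc
      have hck := hc k
      unfold Scond at hck
      rcases hck with ⟨h1, h2⟩ | ⟨h1, h2⟩
      · rw [hMA 1, F1 1, one_mul] at h1; exact lt_irrefl M h1
      · rw [F1 1, one_mul] at h1; exact absurd h1 (not_le.mpr hσ0)
    have hycont : Continuous y := by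
      refine continuous_pi fun j => ?_
      by_cases h : j = k
      · have heq : (fun t : ℝ => y t j) = fun t : ℝ => t * M := by
          funext t; show (if j = k then t * M else _) = _; rw [if_pos h]
        rw [heq]; exact continuous_id.mul continuous_const
      · have heq : (fun t : ℝ => y t j) = fun _ : ℝ => mvec n c L σ0 j := by
          funext t; show (if j = k then _ else _) = _; rw [if_neg h]
        rw [heq]; exact continuous_const
    have hpcont : Continuous path := by
      refine continuous_pi fun j => ?_
      exact (extend_continuous k (n - j.1) j le_rfl).comp hycont
    set u : ℕ → ℝ := fun m => 1 - (1/2:ℝ)^m * (1/2) with hu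
    have humem : ∀ m : ℕ, u m ∈ Set.Ioo (0:ℝ) 1 := by
      intro m
      have h1 : (0:ℝ) < (1/2)^m * (1/2) := by positivity
      have h2 : ((1:ℝ)/2)^m ≤ 1 := pow_le_one₀ (by norm_num) (by norm_num)
      constructor
      · show (0:ℝ) < 1 - (1/2)^m * (1/2); nlinarith
      · show (1:ℝ) - (1/2)^m * (1/2) < 1; nlinarith
    have hpow : Filter.Tendsto (fun m : ℕ => ((1:ℝ)/2)^m) Filter.atTop (nhds 0) :=
      tendsto_pow_atTop_nhds_zero_of_lt_one (by norm_num) (by norm_num)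
    have hutend : Filter.Tendsto u Filter.atTop (nhds 1) := by
      have h3 := Filter.Tendsto.mul_const ((1:ℝ)/2) hpow
      have h4 := Filter.Tendsto.sub (tendsto_const_nhds (x := (1:ℝ))) h3
      simpa [hu] using h4
    have htend : Filter.Tendsto (fun m => path (u m)) Filter.atTop (nhds (path 1)) :=
      (hpcont.tendsto 1).comp hutend
    have hfin : path 1 ∈ Cset n c L :=
      hclosed.mem_of_tendsto htend
        (Filter.Eventually.of_forall fun m => hmem (u m) (humem m))
    exact hnot hfin
  · -- nonneg → closed
    intro hm
    have hAnn : ∀ (k : Fin n) (x : Fin n → ℝ),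
        (∀ j : Fin n, k < j → 0 ≤ x j ∧ x j ≤ Afun n c L j x) → 0 ≤ Afun n c L k x := by
      intro k x hx
      set e : Fin n → ℝ := fun j => if k < j then -(c k j : ℝ) else 0 with he
      have he0 : ∀ j : Fin n, j.1 < k.1 + 1 → e j = 0 := by
        intro j hj
        have h : ¬ k < j := by intro h; have : k.1 < j.1 := h; omega
        simp [he, h]
      have hx' : ∀ j : Fin n, k.1 + 1 ≤ j.1 → 0 ≤ x j ∧ x j ≤ Afun n c L j x := by
        intro j hj
        exact hx j (by rw [Fin.lt_def]; omega)
      obtain ⟨σ', hσ'⟩ := keymin (n - (k.1+1)) (k.1+1) le_rfl e he0 x hx'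
      have hAe : ∀ z : Fin n → ℝ, Afun n c L k z = (L k : ℝ) + ∑ j, e j * z j := by
        intro z
        have h1 : ∀ j : Fin n, e j * z j = if k < j then -((c k j : ℝ) * z j) else 0 := by
          intro j
          by_cases h : k < j <;> simp [he, h]
        rw [Finset.sum_congr rfl fun j _ => h1 j, ← Finset.sum_filter, Finset.sum_neg_distrib]
        unfold Afun
        ring
      set σ := Function.update σ' k false with hσ
      have h1 : mvec n c L σ k = Afun n c L k (mvec n c L σ) := by
        rw [mvec_eq, hσ, Function.update_self]; simp
      have h2 : Afun n c L k (mvec n c L σ) = Afun n c L k (mvec n c L σ') := by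
        refine Afun_congr fun i hi => ?_
        refine mvec_congr (n - i.1) i le_rfl fun i' hii' => ?_
        rw [hσ]
        refine Function.update_of_ne (fun hh => ?_) _ _
        have hlt : k < i' := lt_of_lt_of_le hi hii'
        rw [hh] at hlt; exact lt_irrefl k hlt
      have hge := hm σ k
      rw [h1, h2, hAe (mvec n c L σ')] at hge
      rw [hAe x]
      linarith [hσ']
    have hCP : Cset n c L = Pset n c L := by
      ext x
      constructor
      · intro hx
        intro jj
        have main : ∀ (m : ℕ) (j : Fin n), n - j.1 ≤ m → 0 ≤ x j ∧ x j ≤ Afun n c L j x := by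
          intro m
          induction m with
          | zero => intro j hj; exact absurd hj (by have := j.isLt; omega)
          | succ m ih =>
            intro j hj
            have hupper : ∀ i : Fin n, j < i → 0 ≤ x i ∧ x i ≤ Afun n c L i x := by
              intro i hi
              refine ih i ?_
              have h1 : j.1 < i.1 := hi
              have := i.isLt
              omega
            have hA := hAnn j x hupper
            rcases hx j with ⟨h1, h2⟩ | h
            · linarith
            · exact h
        exact main (n - jj.1) jj le_rfl
      · intro hx j
        exact Or.inr (hx j)
    have hc : ∀ j : Fin n, Continuous (Afun n c L j) := by
      intro j
      unfold Afun
      exact continuous_const.sub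
        (continuous_finset_sum _ fun i _ => continuous_const.mul (continuous_apply i))
    rw [hCP]
    have hP : Pset n c L
        = ⋂ j : Fin n, ({x : Fin n → ℝ | 0 ≤ x j} ∩ {x : Fin n → ℝ | x j ≤ Afun n c L j x}) := by
      ext x
      simp only [Pset, Set.mem_setOf_eq, Set.mem_iInter, Set.mem_inter_iff]
    rw [hP]
    exact isClosed_iInter fun j =>
      (isClosed_le continuous_const (continuous_apply j)).inter
        (isClosed_le (continuous_apply j) (hc j))
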